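/- arXiv:0710.3863 — 8 statements merged into one kernel-verified Lean document; each statement's English description precedes it below -/
import Mathlib

section
/- Let K ⊆ ℝ^m be the nonempty compact attractor of an IFS: K = ⋃_{i=1}^n (A_i(K) + t_i) with each A_i an invertible linear contraction. Then the width function h₀(d) = sup_{k∈K} k·d satisfies the self-similarity equation h₀(d) = max_i ( ‖A_iᵀd‖ · h₀(A_iᵀd/‖A_iᵀd‖) + t_i·d ) for every unit vector d. -/
open scoped InnerProductSpace

theorem width_selfSimilarity {m n : ℕ} (hn : 0 < n)
    (A : Fin n → (EuclideanSpace ℝ (Fin m) →L[ℝ] EuclideanSpace ℝ (Fin m)))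
    (hAbij : ∀ i, Function.Bijective (A i))
    (hAcontr : ∀ i, ‖A i‖ < 1)
    (t : Fin n → EuclideanSpace ℝ (Fin m))
    (K : Set (EuclideanSpace ℝ (Fin m))) (hK : K.Nonempty) (hKc : IsCompact K)
    (hself : K = ⋃ i, (fun x => A i x + t i) '' K)
    (d : EuclideanSpace ℝ (Fin m)) (hd : ‖d‖ = 1) :
    sSup ((fun k => ⟪k, d⟫_ℝ) '' K) =
      ⨆ i : Fin n,
        (‖ContinuousLinearMap.adjoint (A i) d‖ *
            sSup ((fun k => ⟪k, ‖ContinuousLinearMap.adjoint (A i) d‖⁻¹ •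
                ContinuousLinearMap.adjoint (A i) d⟫_ℝ) '' K) +
          ⟪t i, d⟫_ℝ) := by
  haveI : Nonempty (Fin n) := ⟨⟨0, hn⟩⟩
  have hd0 : d ≠ 0 := by intro h; rw [h, norm_zero] at hd; norm_num at hd
  have hwne : ∀ i, ContinuousLinearMap.adjoint (A i) d ≠ 0 := by
    intro i h
    have hinj : Function.Injective (ContinuousLinearMap.adjoint (A i)) := by
      have hsurj := (hAbij i).2
      intro x y hxy
      have h1 : ∀ z, ⟪A i z, x⟫_ℝ = ⟪A i z, y⟫_ℝ := by
        intro z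
        rw [← ContinuousLinearMap.adjoint_inner_right, ← ContinuousLinearMap.adjoint_inner_right,
          hxy]
      have h2 : ∀ u : EuclideanSpace ℝ (Fin m), ⟪u, x - y⟫_ℝ = 0 := by
        intro u
        obtain ⟨z, hz⟩ := hsurj u
        rw [inner_sub_right, ← hz, h1 z, sub_self]
      exact sub_eq_zero.mp (inner_self_eq_zero.mp (h2 (x - y)))
    exact hd0 (hinj (by simpa using h))
  -- max attained for continuous functions on K
  have hmax : ∀ v : EuclideanSpace ℝ (Fin m), ∃ x ∈ K, ∀ y ∈ K, ⟪y, v⟫_ℝ ≤ ⟪x, v⟫_ℝ := by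
    intro v
    obtain ⟨x, hx, hx2⟩ := hKc.exists_isMaxOn (f := fun z => ⟪z, v⟫_ℝ) hK
      (Continuous.continuousOn (continuous_id.inner continuous_const))
    exact ⟨x, hx, fun y hy => hx2 hy⟩
  have hsup : ∀ (v : EuclideanSpace ℝ (Fin m)) (x : EuclideanSpace ℝ (Fin m)), x ∈ K →
      (∀ y ∈ K, ⟪y, v⟫_ℝ ≤ ⟪x, v⟫_ℝ) → sSup ((fun k => ⟪k, v⟫_ℝ) '' K) = ⟪x, v⟫_ℝ := by
    intro v x hx hx2
    apply IsGreatest.csSup_eq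
    exact ⟨⟨x, hx, rfl⟩, by rintro _ ⟨y, hy, rfl⟩; exact hx2 y hy⟩
  obtain ⟨x, hxK, hxmax⟩ := hmax d
  choose y hyK hymax using fun i => hmax (ContinuousLinearMap.adjoint (A i) d)
  have hterm : ∀ i, ‖ContinuousLinearMap.adjoint (A i) d‖ *
      sSup ((fun k => ⟪k, ‖ContinuousLinearMap.adjoint (A i) d‖⁻¹ •
        ContinuousLinearMap.adjoint (A i) d⟫_ℝ) '' K) + ⟪t i, d⟫_ℝ
      = ⟪A i (y i) + t i, d⟫_ℝ := by
    intro i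
    have hwpos : (0:ℝ) < ‖ContinuousLinearMap.adjoint (A i) d‖ :=
      norm_pos_iff.mpr (hwne i)
    have h1 : sSup ((fun k => ⟪k, ‖ContinuousLinearMap.adjoint (A i) d‖⁻¹ •
        ContinuousLinearMap.adjoint (A i) d⟫_ℝ) '' K)
        = ⟪y i, ‖ContinuousLinearMap.adjoint (A i) d‖⁻¹ •
            ContinuousLinearMap.adjoint (A i) d⟫_ℝ := by
      apply hsup _ _ (hyK i)
      intro z hz
      rw [real_inner_smul_right, real_inner_smul_right]
      exact mul_le_mul_of_nonneg_left (hymax i z hz) (by positivity)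
    rw [h1, real_inner_smul_right, ← mul_assoc, mul_inv_cancel₀ (ne_of_gt hwpos), one_mul]
    rw [inner_add_left, ContinuousLinearMap.adjoint_inner_right]
  rw [hsup d x hxK hxmax, iSup_congr hterm]
  have hAyK : ∀ i, A i (y i) + t i ∈ K := by
    intro i
    rw [hself]
    exact Set.mem_iUnion.mpr ⟨i, y i, hyK i, rfl⟩
  apply le_antisymm
  · have hx' : x ∈ ⋃ i, (fun x => A i x + t i) '' K := hself ▸ hxK
    obtain ⟨i, z, hzK, hz⟩ := Set.mem_iUnion.mp hx'
    simp only at hz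
    have hle : ⟪x, d⟫_ℝ ≤ ⟪A i (y i) + t i, d⟫_ℝ := by
      rw [← hz, inner_add_left, inner_add_left]
      gcongr
      rw [← ContinuousLinearMap.adjoint_inner_right, ← ContinuousLinearMap.adjoint_inner_right]
      exact hymax i z hzK
    exact hle.trans (le_ciSup (f := fun j => ⟪A j (y j) + t j, d⟫_ℝ) (Set.Finite.bddAbove (Set.finite_range _)) i)
  · exact ciSup_le fun i => hxmax _ (hAyK i)
end

section
/- Let A_i (i = 1..n) be linear contractions on ℝ^m with nonzero transposes on the unit sphere (e.g. invertible) and t_i ∈ ℝ^m. The operator I_h on continuous functions f : S^{m−1} → ℝ defined by I_h(f)(d) = max_i ( ‖A_iᵀd‖ f(A_iᵀd/‖A_iᵀd‖) + t_i·d ) is a contraction with Lipschitz constant c = max_i ‖A_i‖ < 1 with respect to the supremum norm. -/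
open scoped InnerProductSpace

theorem iteration_operator_contracting {m n : ℕ} (hn : 0 < n)
    (A : Fin n → (EuclideanSpace ℝ (Fin m) →L[ℝ] EuclideanSpace ℝ (Fin m)))
    (hAbij : ∀ i, Function.Bijective (A i))
    (hAcontr : ∀ i, ‖A i‖ < 1)
    (t : Fin n → EuclideanSpace ℝ (Fin m))
    (f g : EuclideanSpace ℝ (Fin m) → ℝ) (hf : Continuous f) (hg : Continuous g) :
    (⨆ d : Metric.sphere (0 : EuclideanSpace ℝ (Fin m)) 1,
        |(⨆ i : Fin n, (‖ContinuousLinearMap.adjoint (A i) (d : EuclideanSpace ℝ (Fin m))‖ *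
              f (‖ContinuousLinearMap.adjoint (A i) (d : EuclideanSpace ℝ (Fin m))‖⁻¹ •
                ContinuousLinearMap.adjoint (A i) (d : EuclideanSpace ℝ (Fin m))) +
            ⟪t i, (d : EuclideanSpace ℝ (Fin m))⟫_ℝ)) -
          (⨆ i : Fin n, (‖ContinuousLinearMap.adjoint (A i) (d : EuclideanSpace ℝ (Fin m))‖ *
              g (‖ContinuousLinearMap.adjoint (A i) (d : EuclideanSpace ℝ (Fin m))‖⁻¹ •
                ContinuousLinearMap.adjoint (A i) (d : EuclideanSpace ℝ (Fin m))) +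
            ⟪t i, (d : EuclideanSpace ℝ (Fin m))⟫_ℝ))|) ≤
      (⨆ i : Fin n, ‖A i‖) *
        ⨆ d : Metric.sphere (0 : EuclideanSpace ℝ (Fin m)) 1,
          |f (d : EuclideanSpace ℝ (Fin m)) - g (d : EuclideanSpace ℝ (Fin m))| := by
  classical
  have hne : Nonempty (Fin n) := ⟨⟨0, hn⟩⟩
  let E := EuclideanSpace ℝ (Fin m)
  set c := ⨆ i : Fin n, ‖A i‖ with hc
  set M := ⨆ d : Metric.sphere (0 : E) 1, |f (d : E) - g (d : E)| with hM
  have hcnn : 0 ≤ c := Real.iSup_nonneg fun i => norm_nonneg _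
  have hMnn : 0 ≤ M := Real.iSup_nonneg fun d => abs_nonneg _
  have hci : ∀ i, ‖A i‖ ≤ c := fun i =>
    le_ciSup (f := fun i => ‖A i‖) (Set.Finite.bddAbove (Set.finite_range _)) i
  have hMbdd : BddAbove (Set.range fun d : Metric.sphere (0 : E) 1 => |f (d : E) - g (d : E)|) := by
    exact (isCompact_range ((hf.sub hg).abs.comp continuous_subtype_val)).bddAbove
  have hMd : ∀ d : Metric.sphere (0 : E) 1, |f (d : E) - g (d : E)| ≤ M :=
    fun d => le_ciSup hMbdd d
  refine Real.iSup_le (fun d => ?_) (mul_nonneg hcnn hMnn)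
  set v : Fin n → E := fun i => ContinuousLinearMap.adjoint (A i) (d : E) with hv
  have hd1 : ‖(d : E)‖ = 1 := by
    have := d.2
    simpa [Metric.mem_sphere, dist_eq_norm] using this
  have hvne : ∀ i, v i ≠ 0 := by
    intro i h0
    have hsurj := (hAbij i).2
    have : (d : E) = 0 := by
      rw [← inner_self_eq_zero (𝕜 := ℝ)]
      obtain ⟨y, hy⟩ := hsurj (d : E)
      calc ⟪(d : E), (d : E)⟫_ℝ = ⟪(d : E), A i y⟫_ℝ := by rw [hy]
        _ = ⟪ContinuousLinearMap.adjoint (A i) (d : E), y⟫_ℝ :=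
            (ContinuousLinearMap.adjoint_inner_left (A i) y (d : E)).symm
        _ = 0 := by
            rw [show (ContinuousLinearMap.adjoint (A i)) (d : EuclideanSpace ℝ (Fin m)) = 0 from h0, inner_zero_left]
    rw [this] at hd1; simp at hd1
  have hvnorm : ∀ i, ‖v i‖ ≤ c := by
    intro i
    calc ‖v i‖ ≤ ‖ContinuousLinearMap.adjoint (A i)‖ * ‖(d : E)‖ :=
          (ContinuousLinearMap.adjoint (A i)).le_opNorm _
      _ = ‖A i‖ := by
          rw [hd1, mul_one]
          exact LinearIsometryEquiv.norm_map ContinuousLinearMap.adjoint (A i)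
      _ ≤ c := hci i
  have hu : ∀ i, (‖v i‖⁻¹ • v i) ∈ Metric.sphere (0 : E) 1 := by
    intro i
    simp [Metric.mem_sphere, dist_eq_norm, norm_smul, abs_of_nonneg,
      inv_mul_cancel₀ (norm_ne_zero_iff.mpr (hvne i))]
  set F : Fin n → ℝ := fun i => ‖v i‖ * f (‖v i‖⁻¹ • v i) + ⟪t i, (d : E)⟫_ℝ with hF
  set G : Fin n → ℝ := fun i => ‖v i‖ * g (‖v i‖⁻¹ • v i) + ⟪t i, (d : E)⟫_ℝ with hG
  have key : ∀ (p q : Fin n → ℝ),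
      (∀ i, p i - q i ≤ c * M) → (⨆ i, p i) - (⨆ i, q i) ≤ c * M := by
    intro p q h
    rw [sub_le_iff_le_add]
    apply ciSup_le
    intro i
    have hq : q i ≤ ⨆ i, q i := le_ciSup (Set.Finite.bddAbove (Set.finite_range _)) i
    have := h i
    linarith
  have hFG : ∀ i, F i - G i ≤ c * M := by
    intro i
    have : F i - G i = ‖v i‖ * (f (‖v i‖⁻¹ • v i) - g (‖v i‖⁻¹ • v i)) := by
      simp [hF, hG]; ring
    rw [this]
    calc ‖v i‖ * (f (‖v i‖⁻¹ • v i) - g (‖v i‖⁻¹ • v i))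
        ≤ ‖v i‖ * |f (‖v i‖⁻¹ • v i) - g (‖v i‖⁻¹ • v i)| :=
          mul_le_mul_of_nonneg_left (le_abs_self _) (norm_nonneg _)
      _ ≤ c * M := mul_le_mul (hvnorm i) (hMd ⟨_, hu i⟩) (abs_nonneg _) hcnn
  have hGF : ∀ i, G i - F i ≤ c * M := by
    intro i
    have : G i - F i = ‖v i‖ * (g (‖v i‖⁻¹ • v i) - f (‖v i‖⁻¹ • v i)) := by
      simp [hF, hG]; ring
    rw [this]
    calc ‖v i‖ * (g (‖v i‖⁻¹ • v i) - f (‖v i‖⁻¹ • v i))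
        ≤ ‖v i‖ * |g (‖v i‖⁻¹ • v i) - f (‖v i‖⁻¹ • v i)| :=
          mul_le_mul_of_nonneg_left (le_abs_self _) (norm_nonneg _)
      _ ≤ c * M := by
          rw [abs_sub_comm]
          exact mul_le_mul (hvnorm i) (hMd ⟨_, hu i⟩) (abs_nonneg _) hcnn
  rw [abs_sub_le_iff]
  exact ⟨key F G hFG, key G F hGF⟩
end

section
/- Under the hypotheses of the previous operator I_h being a contraction on C(S^{m−1}, ℝ), I_h has a unique fixed point, and this fixed point is the width function h₀ of the attractor K of the IFS {x ↦ A_i x + t_i}. -/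
open scoped InnerProductSpace

private lemma sup_union_fin {n : ℕ} [Nonempty (Fin n)] (S : Fin n → Set ℝ)
    (hne : ∀ i, (S i).Nonempty) (hb : BddAbove (⋃ i, S i)) :
    sSup (⋃ i, S i) = ⨆ i, sSup (S i) := by
  apply le_antisymm
  · refine csSup_le (Set.nonempty_iUnion.mpr ⟨Classical.arbitrary _, hne _⟩) ?_
    rintro x hx
    obtain ⟨i, hi⟩ := Set.mem_iUnion.mp hx
    exact le_trans (le_csSup (hb.mono (Set.subset_iUnion S i)) hi)
      (le_ciSup (f := fun j => sSup (S j)) (Set.Finite.bddAbove (Set.finite_range _)) i)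
  · exact ciSup_le fun i => csSup_le_csSup hb (hne i) (Set.subset_iUnion S i)

private lemma abs_ciSup_sub {n : ℕ} [Nonempty (Fin n)] (x y : Fin n → ℝ) :
    |(⨆ i, x i) - ⨆ i, y i| ≤ ⨆ i, |x i - y i| := by
  have hb : ∀ z : Fin n → ℝ, BddAbove (Set.range z) :=
    fun z => Set.Finite.bddAbove (Set.finite_range z)
  rw [abs_sub_le_iff]
  constructor
  · rw [sub_le_iff_le_add]
    refine ciSup_le fun i => ?_
    have h1 : x i ≤ |x i - y i| + y i := by
      have := le_abs_self (x i - y i); linarith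
    exact h1.trans (add_le_add (le_ciSup (f := fun j => |x j - y j|) (hb _) i)
      (le_ciSup (f := y) (hb _) i))
  · rw [sub_le_iff_le_add]
    refine ciSup_le fun i => ?_
    have h1 : y i ≤ |x i - y i| + x i := by
      have := neg_abs_le (x i - y i); linarith
    exact h1.trans (add_le_add (le_ciSup (f := fun j => |x j - y j|) (hb _) i)
      (le_ciSup (f := x) (hb _) i))

private lemma adjoint_apply_ne_zero {m : ℕ}
    (A : EuclideanSpace ℝ (Fin m) →L[ℝ] EuclideanSpace ℝ (Fin m))
    (hA : Function.Bijective A) (d : EuclideanSpace ℝ (Fin m)) (hd : ‖d‖ = 1) :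
    ContinuousLinearMap.adjoint A d ≠ 0 := by
  intro h
  obtain ⟨x, hx⟩ := hA.2 d
  have h2 : ⟪d, A x⟫_ℝ = 0 := by
    rw [← ContinuousLinearMap.adjoint_inner_left, h, inner_zero_left]
  rw [hx] at h2
  have : d = 0 := by
    have := real_inner_self_eq_norm_sq d
    rw [h2] at this
    have : ‖d‖ = 0 := by nlinarith
    exact norm_eq_zero.mp this
  rw [this] at hd; simp at hd

private lemma width_fixed {m n : ℕ} (hn : 0 < n)
    (A : Fin n → (EuclideanSpace ℝ (Fin m) →L[ℝ] EuclideanSpace ℝ (Fin m)))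
    (hAbij : ∀ i, Function.Bijective (A i))
    (t : Fin n → EuclideanSpace ℝ (Fin m))
    (K : Set (EuclideanSpace ℝ (Fin m))) (hK : K.Nonempty) (hKc : IsCompact K)
    (hself : K = ⋃ i, (fun x => A i x + t i) '' K)
    (d : EuclideanSpace ℝ (Fin m)) (hd : ‖d‖ = 1) :
    (⨆ i : Fin n, (‖ContinuousLinearMap.adjoint (A i) d‖ *
        sSup ((fun k => ⟪k, ‖ContinuousLinearMap.adjoint (A i) d‖⁻¹ •
            ContinuousLinearMap.adjoint (A i) d⟫_ℝ) '' K) +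
      ⟪t i, d⟫_ℝ)) = sSup ((fun k => ⟪k, d⟫_ℝ) '' K) := by
  haveI : Nonempty (Fin n) := ⟨⟨0, hn⟩⟩
  set v : Fin n → EuclideanSpace ℝ (Fin m) :=
    fun i => ContinuousLinearMap.adjoint (A i) d with hv
  have hvne : ∀ i, v i ≠ 0 := fun i => adjoint_apply_ne_zero (A i) (hAbij i) d hd
  have ha : ∀ i, (0:ℝ) < ‖v i‖ := fun i => norm_pos_iff.mpr (hvne i)
  have stepA : ∀ i, ‖v i‖ * sSup ((fun k => ⟪k, ‖v i‖⁻¹ • v i⟫_ℝ) '' K) + ⟪t i, d⟫_ℝ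
      = sSup ((fun k => ⟪A i k + t i, d⟫_ℝ) '' K) := by
    intro i
    have hcont : Continuous fun k : EuclideanSpace ℝ (Fin m) => ⟪k, ‖v i‖⁻¹ • v i⟫_ℝ :=
      Continuous.inner continuous_id continuous_const
    obtain ⟨k0, hk0K, hmax⟩ := hKc.exists_isMaxOn hK hcont.continuousOn
    have heq : ∀ k, ⟪A i k + t i, d⟫_ℝ
        = ‖v i‖ * ⟪k, ‖v i‖⁻¹ • v i⟫_ℝ + ⟪t i, d⟫_ℝ := by
      intro k
      have h1 : ⟪k, v i⟫_ℝ = ⟪A i k, d⟫_ℝ := ContinuousLinearMap.adjoint_inner_right (A i) k d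
      rw [inner_add_left, real_inner_smul_right, ← h1, ← mul_assoc,
        mul_inv_cancel₀ (ne_of_gt (ha i)), one_mul]
    have hG1 : IsGreatest ((fun k => ⟪k, ‖v i‖⁻¹ • v i⟫_ℝ) '' K)
        (⟪k0, ‖v i‖⁻¹ • v i⟫_ℝ) := by
      refine ⟨Set.mem_image_of_mem _ hk0K, ?_⟩
      rintro x ⟨k, hk, rfl⟩
      exact hmax hk
    have hG2 : IsGreatest ((fun k => ⟪A i k + t i, d⟫_ℝ) '' K) (⟪A i k0 + t i, d⟫_ℝ) := by
      refine ⟨Set.mem_image_of_mem _ hk0K, ?_⟩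
      rintro x ⟨k, hk, rfl⟩
      simp only
      rw [heq k, heq k0]
      have := mul_le_mul_of_nonneg_left (hmax hk) (le_of_lt (ha i))
      linarith
    rw [hG1.csSup_eq, hG2.csSup_eq, heq k0]
  have himg : (fun k => ⟪k, d⟫_ℝ) '' K
      = ⋃ i, (fun k => ⟪A i k + t i, d⟫_ℝ) '' K := by
    conv_lhs => rw [hself]
    rw [Set.image_iUnion]
    refine Set.iUnion_congr fun i => ?_
    rw [Set.image_image]
  have hbdd : BddAbove ((fun k => ⟪k, d⟫_ℝ) '' K) :=
    (hKc.image (Continuous.inner continuous_id continuous_const)).bddAbove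
  rw [himg] at hbdd
  have := sup_union_fin (fun i => (fun k => ⟪A i k + t i, d⟫_ℝ) '' K)
    (fun i => hK.image _) hbdd
  rw [himg, this]
  exact iSup_congr stepA

theorem width_is_unique_fixed_point {m n : ℕ} (hn : 0 < n)
    (A : Fin n → (EuclideanSpace ℝ (Fin m) →L[ℝ] EuclideanSpace ℝ (Fin m)))
    (hAbij : ∀ i, Function.Bijective (A i))
    (hAcontr : ∀ i, ‖A i‖ < 1)
    (t : Fin n → EuclideanSpace ℝ (Fin m))
    (K : Set (EuclideanSpace ℝ (Fin m))) (hK : K.Nonempty) (hKc : IsCompact K)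
    (hself : K = ⋃ i, (fun x => A i x + t i) '' K) :
    (∀ d : EuclideanSpace ℝ (Fin m), ‖d‖ = 1 →
      (⨆ i : Fin n, (‖ContinuousLinearMap.adjoint (A i) d‖ *
          sSup ((fun k => ⟪k, ‖ContinuousLinearMap.adjoint (A i) d‖⁻¹ •
              ContinuousLinearMap.adjoint (A i) d⟫_ℝ) '' K) +
        ⟪t i, d⟫_ℝ)) = sSup ((fun k => ⟪k, d⟫_ℝ) '' K)) ∧
    (∀ f : EuclideanSpace ℝ (Fin m) → ℝ, Continuous f →
      (∀ d : EuclideanSpace ℝ (Fin m), ‖d‖ = 1 →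
        (⨆ i : Fin n, (‖ContinuousLinearMap.adjoint (A i) d‖ *
            f (‖ContinuousLinearMap.adjoint (A i) d‖⁻¹ •
              ContinuousLinearMap.adjoint (A i) d) +
          ⟪t i, d⟫_ℝ)) = f d) →
      ∀ d : EuclideanSpace ℝ (Fin m), ‖d‖ = 1 →
        f d = sSup ((fun k => ⟪k, d⟫_ℝ) '' K)) := by
  haveI : Nonempty (Fin n) := ⟨⟨0, hn⟩⟩
  refine ⟨width_fixed hn A hAbij t K hK hKc hself, ?_⟩
  intro f hf hfix d hd
  set h : EuclideanSpace ℝ (Fin m) → ℝ := fun u => sSup ((fun k => ⟪k, u⟫_ℝ) '' K) with hh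
  -- bound on h over the sphere
  set C : ℝ := sSup ((fun k : EuclideanSpace ℝ (Fin m) => ‖k‖) '' K) with hC
  have hCb : BddAbove ((fun k : EuclideanSpace ℝ (Fin m) => ‖k‖) '' K) := (hKc.image continuous_norm).bddAbove
  have hhb : ∀ u : EuclideanSpace ℝ (Fin m), ‖u‖ = 1 → |h u| ≤ C := by
    intro u hu
    have hbu : BddAbove ((fun k => ⟪k, u⟫_ℝ) '' K) :=
      (hKc.image (Continuous.inner continuous_id continuous_const)).bddAbove
    rw [abs_le]
    constructor
    · obtain ⟨k0, hk0⟩ := hK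
      have h1 : ⟪k0, u⟫_ℝ ≤ h u := le_csSup hbu (Set.mem_image_of_mem _ hk0)
      have h2 : |⟪k0, u⟫_ℝ| ≤ ‖k0‖ * ‖u‖ := abs_real_inner_le_norm k0 u
      have h3 : ‖k0‖ ≤ C := le_csSup hCb (Set.mem_image_of_mem _ hk0)
      rw [hu, mul_one] at h2
      have := neg_abs_le ⟪k0, u⟫_ℝ
      linarith
    · refine csSup_le (hK.image _) ?_
      rintro x ⟨k, hk, rfl⟩
      have h2 : |⟪k, u⟫_ℝ| ≤ ‖k‖ * ‖u‖ := abs_real_inner_le_norm k u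
      have h3 : ‖k‖ ≤ C := le_csSup hCb (Set.mem_image_of_mem _ hk)
      rw [hu, mul_one] at h2
      have := le_abs_self ⟪k, u⟫_ℝ
      linarith
  -- bound on f over the sphere
  obtain ⟨B, hB⟩ := (isCompact_sphere (0:EuclideanSpace ℝ (Fin m)) 1).exists_bound_of_continuousOn hf.continuousOn
  -- the sup of |f - h| over the sphere
  set S : Set ℝ := (fun u => |f u - h u|) '' Metric.sphere (0:EuclideanSpace ℝ (Fin m)) 1 with hS
  have hdS : d ∈ Metric.sphere (0:EuclideanSpace ℝ (Fin m)) 1 := mem_sphere_zero_iff_norm.mpr hd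
  have hSne : S.Nonempty := ⟨_, Set.mem_image_of_mem _ hdS⟩
  have hSb : BddAbove S := by
    refine ⟨B + C, ?_⟩
    rintro x ⟨u, hu, rfl⟩
    have hu1 : ‖u‖ = 1 := mem_sphere_zero_iff_norm.mp hu
    have := hB u hu
    rw [Real.norm_eq_abs] at this
    have := hhb u hu1
    calc |f u - h u| ≤ |f u| + |h u| := abs_sub _ _
      _ ≤ B + C := by linarith
  set M : ℝ := sSup S with hM
  have hM0 : 0 ≤ M := le_trans (abs_nonneg _) (le_csSup hSb (Set.mem_image_of_mem _ hdS))
  -- contraction ratio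
  set r : ℝ := Finset.univ.sup' Finset.univ_nonempty (fun i : Fin n => ‖A i‖) with hr
  have hr1 : r < 1 := (Finset.sup'_lt_iff _).mpr fun i _ => hAcontr i
  have hri : ∀ i, ‖A i‖ ≤ r := fun i => Finset.le_sup' (fun j : Fin n => ‖A j‖) (Finset.mem_univ i)
  have hr0 : 0 ≤ r := le_trans (norm_nonneg _) (hri (Classical.arbitrary _))
  -- per-point bound
  have hpt : ∀ u : EuclideanSpace ℝ (Fin m), ‖u‖ = 1 → |f u - h u| ≤ r * M := by
    intro u hu
    have hfu := hfix u hu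
    have hhu := width_fixed hn A hAbij t K hK hKc hself u hu
    simp only [hh]
    rw [← hfu, ← hhu]
    set w : Fin n → EuclideanSpace ℝ (Fin m) :=
      fun i => ‖ContinuousLinearMap.adjoint (A i) u‖⁻¹ • ContinuousLinearMap.adjoint (A i) u
      with hw
    have hvne : ∀ i, ContinuousLinearMap.adjoint (A i) u ≠ 0 :=
      fun i => adjoint_apply_ne_zero (A i) (hAbij i) u hu
    have hwu : ∀ i, ‖w i‖ = 1 := by
      intro i
      rw [hw]
      simp only [norm_smul, norm_inv, norm_norm]
      exact inv_mul_cancel₀ (norm_ne_zero_iff.mpr (hvne i))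
    have hai : ∀ i, ‖ContinuousLinearMap.adjoint (A i) u‖ ≤ r := by
      intro i
      have h1 : ‖ContinuousLinearMap.adjoint (A i) u‖ ≤ ‖ContinuousLinearMap.adjoint (A i)‖ * ‖u‖ :=
        ContinuousLinearMap.le_opNorm _ _
      rw [hu, mul_one, LinearIsometryEquiv.norm_map ContinuousLinearMap.adjoint (A i)] at h1
      exact h1.trans (hri i)
    refine le_trans (abs_ciSup_sub _ _) (ciSup_le fun i => ?_)
    have heq : ‖ContinuousLinearMap.adjoint (A i) u‖ * f (w i) + ⟪t i, u⟫_ℝ -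
        (‖ContinuousLinearMap.adjoint (A i) u‖ * h (w i) + ⟪t i, u⟫_ℝ)
        = ‖ContinuousLinearMap.adjoint (A i) u‖ * (f (w i) - h (w i)) := by ring
    rw [heq, abs_mul, abs_norm]
    have hM1 : |f (w i) - h (w i)| ≤ M := by
      refine le_csSup hSb ?_
      exact Set.mem_image_of_mem _ (mem_sphere_zero_iff_norm.mpr (hwu i))
    exact mul_le_mul (hai i) hM1 (abs_nonneg _) hr0
  have hMr : M ≤ r * M := by
    refine csSup_le hSne ?_
    rintro x ⟨u, hu, rfl⟩
    exact hpt u (mem_sphere_zero_iff_norm.mp hu)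
  have hM00 : M ≤ 0 := by nlinarith
  have := hpt d hd
  have : |f d - h d| ≤ 0 := le_trans this (by nlinarith)
  have : f d - h d = 0 := abs_eq_zero.mp (le_antisymm this (abs_nonneg _))
  have : f d = h d := by linarith
  exact this
end

section
/- Let L ⊆ ℝ^m be a compact convex set, x₀ ∈ L, and define L_{x₀} = {x ∈ ℝ^m : x = x₀, or (x − x₀)·(x − x₀)/‖x − x₀‖ ≤ h_{x₀}((x−x₀)/‖x−x₀‖)} where h_{x₀}(d) = sup_{y∈L}(y−x₀)·d. Then L ⊆ L_{x₀} ⊆ closed ball B(x₀, R) where R = sup_d h_{x₀}(d), and sup_{x∈L_{x₀}} dist(x, L) ≤ R/2. -/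
open scoped InnerProductSpace

theorem one_direction_approx {m : ℕ}
    (L : Set (EuclideanSpace ℝ (Fin m))) (hL : L.Nonempty) (hLc : IsCompact L)
    (hLconv : Convex ℝ L) (x₀ : EuclideanSpace ℝ (Fin m)) (hx₀ : x₀ ∈ L)
    (Lx : Set (EuclideanSpace ℝ (Fin m)))
    (hLx : Lx = {x | x = x₀ ∨
      ⟪x - x₀, x - x₀⟫_ℝ / ‖x - x₀‖ ≤
        sSup ((fun y => ⟪y - x₀, ‖x - x₀‖⁻¹ • (x - x₀)⟫_ℝ) '' L)})
    (R : ℝ)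
    (hR : R = ⨆ d : Metric.sphere (0 : EuclideanSpace ℝ (Fin m)) 1,
        sSup ((fun y => ⟪y - x₀, (d : EuclideanSpace ℝ (Fin m))⟫_ℝ) '' L)) :
    L ⊆ Lx ∧ Lx ⊆ Metric.closedBall x₀ R ∧
      (⨆ x : Lx, Metric.infDist (x : EuclideanSpace ℝ (Fin m)) L) ≤ R / 2 := by

  set f : EuclideanSpace ℝ (Fin m) → ℝ := fun d => sSup ((fun y => ⟪y - x₀, d⟫_ℝ) '' L) with hf
  -- bound on L
  obtain ⟨r, hr⟩ := hLc.isBounded.subset_closedBall x₀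
  set C : ℝ := max r 0 with hCdef
  have hC : ∀ y ∈ L, ‖y - x₀‖ ≤ C := by
    intro y hy
    have := hr hy
    rw [Metric.mem_closedBall, dist_eq_norm] at this
    exact this.trans (le_max_left _ _)
  have himg : ∀ d : (EuclideanSpace ℝ (Fin m)), ‖d‖ ≤ 1 → ∀ z ∈ (fun y => ⟪y - x₀, d⟫_ℝ) '' L, z ≤ C := by
    rintro d hd z ⟨y, hy, rfl⟩
    calc ⟪y - x₀, d⟫_ℝ ≤ ‖y - x₀‖ * ‖d‖ := real_inner_le_norm _ _
      _ ≤ C * 1 := by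
          apply mul_le_mul (hC y hy) hd (norm_nonneg _) (le_max_right _ _)
      _ = C := mul_one C
  have hbdd : ∀ d : (EuclideanSpace ℝ (Fin m)), ‖d‖ ≤ 1 → BddAbove ((fun y => ⟪y - x₀, d⟫_ℝ) '' L) :=
    fun d hd => ⟨C, fun z hz => himg d hd z hz⟩
  have hne : ∀ d : (EuclideanSpace ℝ (Fin m)), ((fun y => ⟪y - x₀, d⟫_ℝ) '' L).Nonempty := fun d => hL.image _
  have hle : ∀ y ∈ L, ∀ d : (EuclideanSpace ℝ (Fin m)), ‖d‖ ≤ 1 → ⟪y - x₀, d⟫_ℝ ≤ f d := by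
    intro y hy d hd
    exact le_csSup (hbdd d hd) ⟨y, hy, rfl⟩
  have hfC : ∀ d : (EuclideanSpace ℝ (Fin m)), ‖d‖ ≤ 1 → f d ≤ C := fun d hd => csSup_le (hne d) (himg d hd)
  have hf0 : ∀ d : (EuclideanSpace ℝ (Fin m)), ‖d‖ ≤ 1 → 0 ≤ f d := by
    intro d hd
    have := hle x₀ hx₀ d hd
    simpa using this
  have hRbdd : BddAbove (Set.range fun d : Metric.sphere (0 : EuclideanSpace ℝ (Fin m)) 1 => f d) := by
    refine ⟨C, ?_⟩
    rintro z ⟨d, rfl⟩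
    exact hfC d (by simp [mem_sphere_zero_iff_norm.mp d.2])
  have hfR : ∀ d : (EuclideanSpace ℝ (Fin m)), ‖d‖ = 1 → f d ≤ R := by
    intro d hd
    rw [hR]
    exact le_ciSup hRbdd ⟨d, mem_sphere_zero_iff_norm.mpr hd⟩
  have hR0 : 0 ≤ R := by
    rw [hR]
    exact Real.iSup_nonneg fun d => hf0 d (le_of_eq (mem_sphere_zero_iff_norm.mp d.2))
  -- Part A
  have hA : L ⊆ Lx := by
    intro x hx
    rw [hLx]
    by_cases hxx : x = x₀
    · exact Or.inl hxx
    · right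
      have hv : x - x₀ ≠ 0 := sub_ne_zero.mpr hxx
      have hvn : (0:ℝ) < ‖x - x₀‖ := norm_pos_iff.mpr hv
      have hu1 : ‖‖x - x₀‖⁻¹ • (x - x₀)‖ = 1 := norm_smul_inv_norm hv
      have key := hle x hx (‖x - x₀‖⁻¹ • (x - x₀)) (le_of_eq hu1)
      have : ⟪x - x₀, ‖x - x₀‖⁻¹ • (x - x₀)⟫_ℝ = ⟪x - x₀, x - x₀⟫_ℝ / ‖x - x₀‖ := by
        rw [real_inner_smul_right]
        ring
      rw [this] at key
      exact key
  -- Part B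
  have hB : Lx ⊆ Metric.closedBall x₀ R := by
    intro x hx
    rw [hLx] at hx
    rw [Metric.mem_closedBall, dist_eq_norm]
    by_cases hxx : x = x₀
    · simp [hxx, hR0]
    · have hv : x - x₀ ≠ 0 := sub_ne_zero.mpr hxx
      have hvn : (0:ℝ) < ‖x - x₀‖ := norm_pos_iff.mpr hv
      have hu1 : ‖‖x - x₀‖⁻¹ • (x - x₀)‖ = 1 := norm_smul_inv_norm hv
      rcases hx with h | h
      · exact absurd h hxx
      · have hxn : ‖x - x₀‖ ≤ f (‖x - x₀‖⁻¹ • (x - x₀)) := by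
          have : ⟪x - x₀, x - x₀⟫_ℝ / ‖x - x₀‖ = ‖x - x₀‖ := by
            rw [real_inner_self_eq_norm_mul_norm]
            field_simp
          rw [this] at h
          exact h
        exact hxn.trans (hfR _ hu1)
  refine ⟨hA, hB, ?_⟩
  -- Part C
  have hx₀Lx : x₀ ∈ Lx := hA hx₀
  have : Nonempty Lx := ⟨⟨x₀, hx₀Lx⟩⟩
  apply ciSup_le
  rintro ⟨x, hx⟩
  by_cases hxx : x = x₀
  · simp only [hxx]
    rw [Metric.infDist_zero_of_mem hx₀]
    linarith
  · have hv : x - x₀ ≠ 0 := sub_ne_zero.mpr hxx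
    have hvn : (0:ℝ) < ‖x - x₀‖ := norm_pos_iff.mpr hv
    set u : EuclideanSpace ℝ (Fin m) := ‖x - x₀‖⁻¹ • (x - x₀) with hudef
    have hu1 : ‖u‖ = 1 := norm_smul_inv_norm hv
    rw [hLx] at hx
    have hxn : ‖x - x₀‖ ≤ f u := by
      rcases hx with h | h
      · exact absurd h hxx
      · have : ⟪x - x₀, x - x₀⟫_ℝ / ‖x - x₀‖ = ‖x - x₀‖ := by
          rw [real_inner_self_eq_norm_mul_norm]
          field_simp
        rw [this] at h
        exact h
    -- maximizer
    have hcont : ContinuousOn (fun y : EuclideanSpace ℝ (Fin m) => ⟪y - x₀, u⟫_ℝ) L := by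
      exact (Continuous.inner (continuous_id.sub continuous_const) continuous_const).continuousOn
    obtain ⟨y, hyL, hymax⟩ := hLc.exists_isMaxOn hL hcont
    have hfu : f u ≤ ⟪y - x₀, u⟫_ℝ := csSup_le (hne u) (by rintro z ⟨w, hw, rfl⟩; exact hymax hw)
    have hyu : ‖x - x₀‖ ≤ ⟪y - x₀, u⟫_ℝ := hxn.trans hfu
    have hyR : ‖y - x₀‖ ≤ R := by
      have := hB (hA hyL)
      rw [Metric.mem_closedBall, dist_eq_norm] at this
      exact this
    set p : EuclideanSpace ℝ (Fin m) := (2⁻¹:ℝ) • x₀ + (2⁻¹:ℝ) • y with hpdef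
    have hpL : p ∈ L := hLconv hx₀ hyL (by norm_num) (by norm_num) (by norm_num)
    have hxp : x - p = (x - x₀) - (2:ℝ)⁻¹ • (y - x₀) := by
      rw [hpdef]; module
    have hsq : ‖x - p‖ ^ 2 ≤ (R / 2) ^ 2 := by
      rw [hxp, norm_sub_sq_real, real_inner_smul_right, norm_smul]
      have hvu : ⟪x - x₀, y - x₀⟫_ℝ = ‖x - x₀‖ * ⟪u, y - x₀⟫_ℝ := by
        have : x - x₀ = ‖x - x₀‖ • u := by
          rw [hudef, smul_smul, mul_inv_cancel₀ hvn.ne', one_smul]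
        conv_lhs => rw [this]
        rw [real_inner_smul_left]
      have hcomm : ⟪u, y - x₀⟫_ℝ = ⟪y - x₀, u⟫_ℝ := real_inner_comm _ _
      have h1 : ‖x - x₀‖ ≤ ⟪u, y - x₀⟫_ℝ := by rw [hcomm]; exact hyu
      have h2 : (0:ℝ) ≤ ‖y - x₀‖ := norm_nonneg _
      rw [Real.norm_eq_abs, abs_of_pos (by norm_num : (0:ℝ) < 2⁻¹)]
      nlinarith [mul_le_mul_of_nonneg_left h1 hvn.le, mul_self_le_mul_self h2 hyR, hvu, hyR, hR0]
    have hxple : ‖x - p‖ ≤ R / 2 := by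
      nlinarith [norm_nonneg (x - p)]
    calc Metric.infDist x L ≤ dist x p := Metric.infDist_le_dist_of_mem hpL
      _ = ‖x - p‖ := dist_eq_norm _ _
      _ ≤ R / 2 := hxple
end

section
/- If L = [a,b] ⊆ ℝ^m is a segment and x₀ = a is one of its endpoints, then L_{x₀} = {x : (x − a)·(x−a)/‖x−a‖ ≤ h_a((x−a)/‖x−a‖)} ∪ {a} is exactly the closed ball with center (a+b)/2 and radius ‖b−a‖/2. -/
open scoped InnerProductSpace

lemma sSup_inner_segment {m : ℕ} (a b v : EuclideanSpace ℝ (Fin m)) :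
    sSup ((fun y => ⟪y - a, v⟫_ℝ) '' segment ℝ a b) = max 0 ⟪b - a, v⟫_ℝ := by
  have h1 : (fun y => ⟪y - a, v⟫_ℝ) '' segment ℝ a b = segment ℝ 0 ⟪b - a, v⟫_ℝ := by
    rw [segment_eq_image' ℝ a b, Set.image_image, segment_eq_image' ℝ (0:ℝ)]
    apply Set.image_congr
    intro t _
    simp only [add_sub_cancel_left, real_inner_smul_left, sub_zero, zero_add, smul_eq_mul]
  rw [h1, segment_eq_uIcc, Set.uIcc, csSup_Icc inf_le_sup]

theorem segment_one_direction_set_is_ball {m : ℕ}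
    (a b : EuclideanSpace ℝ (Fin m)) :
    {x : EuclideanSpace ℝ (Fin m) | x = a ∨
        ⟪x - a, x - a⟫_ℝ / ‖x - a‖ ≤
          sSup ((fun y => ⟪y - a, ‖x - a‖⁻¹ • (x - a)⟫_ℝ) '' segment ℝ a b)} =
      Metric.closedBall (midpoint ℝ a b) (‖b - a‖ / 2) := by
  ext x
  simp only [Set.mem_setOf_eq, Metric.mem_closedBall, sSup_inner_segment]
  set u := x - a with hu
  set d := b - a with hdd
  have hmid : x - midpoint ℝ a b = u - (2:ℝ)⁻¹ • d := by
    rw [midpoint_eq_smul_add, show ((⅟2:ℝ)) = (2:ℝ)⁻¹ from by norm_num, hu, hdd]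
    module
  have hball : dist x (midpoint ℝ a b) ≤ ‖d‖ / 2 ↔ ‖u‖ ^ 2 ≤ ⟪d, u⟫_ℝ := by
    rw [dist_eq_norm, hmid]
    rw [show (‖u - (2:ℝ)⁻¹ • d‖ ≤ ‖d‖ / 2) ↔ ‖u - (2:ℝ)⁻¹ • d‖ ^ 2 ≤ (‖d‖ / 2) ^ 2 from
      (pow_le_pow_iff_left₀ (norm_nonneg _) (by positivity) two_ne_zero).symm]
    rw [norm_sub_sq_real, real_inner_smul_right, norm_smul, real_inner_comm]
    simp only [norm_inv, Real.norm_ofNat]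
    constructor <;> intro h <;> nlinarith [norm_nonneg d]
  rw [hball]
  constructor
  · rintro (rfl | h)
    · simp [hu]
    · rcases eq_or_ne x a with rfl | hx
      · simp [hu]
      · have hn : 0 < ‖u‖ := by
          rw [hu, norm_pos_iff, sub_ne_zero]; exact hx
        rw [real_inner_self_eq_norm_sq] at h
        have h' : ‖u‖ ≤ max 0 ⟪d, ‖u‖⁻¹ • u⟫_ℝ := by
          calc ‖u‖ = ‖u‖ ^ 2 / ‖u‖ := by field_simp [sq]
          _ ≤ _ := h
        rw [real_inner_smul_right] at h'
        rcases le_max_iff.mp h' with h0 | hc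
        · linarith
        · rw [le_inv_mul_iff₀ hn] at hc
          nlinarith
  · intro h
    rcases eq_or_ne x a with rfl | hx
    · exact Or.inl rfl
    · right
      have hn : 0 < ‖u‖ := by
        rw [hu, norm_pos_iff, sub_ne_zero]; exact hx
      rw [real_inner_self_eq_norm_sq, real_inner_smul_right]
      refine le_trans ?_ (le_max_right _ _)
      rw [div_le_iff₀ hn]
      have heq : ‖u‖⁻¹ * ⟪d, u⟫_ℝ * ‖u‖ = ⟪d, u⟫_ℝ := by field_simp
      rw [heq]; exact h
end

section
/- Suppose A₁ = A₂ = ⋯ = A_n = A with A an invertible linear contraction on ℝ^m, and K = ⋃_i(A(K)+t_i) is the attractor. Then the width function h₀(d) = sup_{k∈K} k·d satisfies h₀(d) = ‖Aᵀd‖ h₀(Aᵀd/‖Aᵀd‖) + h*(d), where h*(d) = max_i t_i·d. -/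
open scoped InnerProductSpace
open Pointwise

theorem width_equal_maps_equation {m n : ℕ} (hn : 0 < n)
    (A : EuclideanSpace ℝ (Fin m) ≃L[ℝ] EuclideanSpace ℝ (Fin m))
    (hAcontr : ‖(A : EuclideanSpace ℝ (Fin m) →L[ℝ] EuclideanSpace ℝ (Fin m))‖ < 1)
    (t : Fin n → EuclideanSpace ℝ (Fin m))
    (K : Set (EuclideanSpace ℝ (Fin m))) (hK : K.Nonempty) (hKc : IsCompact K)
    (hself : K = ⋃ i, (fun x => A x + t i) '' K)
    (d : EuclideanSpace ℝ (Fin m)) (hd : ‖d‖ = 1) :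
    sSup ((fun k => ⟪k, d⟫_ℝ) '' K) =
      ‖ContinuousLinearMap.adjoint
          (A : EuclideanSpace ℝ (Fin m) →L[ℝ] EuclideanSpace ℝ (Fin m)) d‖ *
        sSup ((fun k => ⟪k,
          ‖ContinuousLinearMap.adjoint
              (A : EuclideanSpace ℝ (Fin m) →L[ℝ] EuclideanSpace ℝ (Fin m)) d‖⁻¹ •
            ContinuousLinearMap.adjoint
              (A : EuclideanSpace ℝ (Fin m) →L[ℝ] EuclideanSpace ℝ (Fin m)) d⟫_ℝ) '' K) +
      ⨆ i : Fin n, ⟪t i, d⟫_ℝ := by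
  haveI : NeZero n := ⟨hn.ne'⟩
  set B := ContinuousLinearMap.adjoint
      (A : EuclideanSpace ℝ (Fin m) →L[ℝ] EuclideanSpace ℝ (Fin m)) with hB
  set v := B d with hv
  -- v ≠ 0
  have hvne : v ≠ 0 := by
    intro h0
    have hdd : ⟪(d : EuclideanSpace ℝ (Fin m)), d⟫_ℝ = 0 := by
      have := ContinuousLinearMap.adjoint_inner_right
        (A : EuclideanSpace ℝ (Fin m) →L[ℝ] EuclideanSpace ℝ (Fin m)) (A.symm d) d
      -- ⟪A (A.symm d), d⟫ = ⟪A.symm d, B d⟫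
      calc ⟪(d : EuclideanSpace ℝ (Fin m)), d⟫_ℝ
          = ⟪(A : EuclideanSpace ℝ (Fin m) →L[ℝ] EuclideanSpace ℝ (Fin m)) (A.symm d), d⟫_ℝ := by
            simp
        _ = ⟪A.symm d, v⟫_ℝ := by rw [hv, hB]; exact (this).symm
        _ = 0 := by rw [h0, inner_zero_right]
    have : ‖d‖ = 0 := by
      have := real_inner_self_eq_norm_sq d
      nlinarith [this, hdd]
    rw [hd] at this; norm_num at this
  have hc : (0:ℝ) < ‖v‖ := norm_pos_iff.mpr hvne
  -- continuity / boundedness facts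
  have himg : ∀ w : EuclideanSpace ℝ (Fin m),
      BddAbove ((fun k => ⟪k, w⟫_ℝ) '' K) ∧ ((fun k => ⟪k, w⟫_ℝ) '' K).Nonempty := fun w =>
    ⟨(hKc.image (Continuous.inner continuous_id continuous_const)).bddAbove, hK.image _⟩
  -- Step 1: the scaled sSup
  have step1 : ‖v‖ * sSup ((fun k => ⟪k, ‖v‖⁻¹ • v⟫_ℝ) '' K)
      = sSup ((fun k => ⟪k, v⟫_ℝ) '' K) := by
    have himeq : (fun k => ⟪k, ‖v‖⁻¹ • v⟫_ℝ) '' K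
        = ‖v‖⁻¹ • ((fun k => ⟪k, v⟫_ℝ) '' K) := by
      rw [← Set.image_smul, ← Set.image_comp]
      refine Set.image_congr fun k _ => ?_
      show ⟪k, ‖v‖⁻¹ • v⟫_ℝ = ‖v‖⁻¹ • ⟪k, v⟫_ℝ
      rw [real_inner_smul_right, smul_eq_mul]
    rw [himeq, Real.sSup_smul_of_nonneg (by positivity), smul_eq_mul]
    field_simp
  -- the sup over translations is attained
  obtain ⟨i₀, hi₀⟩ := Finite.exists_max (fun i : Fin n => ⟪t i, d⟫_ℝ)
  have hT : (⨆ i : Fin n, ⟪t i, d⟫_ℝ) = ⟪t i₀, d⟫_ℝ :=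
    le_antisymm (ciSup_le hi₀) (le_ciSup (f := fun i => ⟪t i, d⟫_ℝ) (Set.Finite.bddAbove (Set.finite_range _)) i₀)
  set T := ⨆ i : Fin n, ⟪t i, d⟫_ℝ with hTdef
  set s := sSup ((fun k => ⟪k, v⟫_ℝ) '' K) with hs
  -- adjoint identity
  have hadj : ∀ k : EuclideanSpace ℝ (Fin m),
      ⟪(A : EuclideanSpace ℝ (Fin m) →L[ℝ] EuclideanSpace ℝ (Fin m)) k, d⟫_ℝ = ⟪k, v⟫_ℝ :=
    fun k => (ContinuousLinearMap.adjoint_inner_right _ k d).symm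
  -- Step 2: main identity via IsLUB
  have main : IsLUB ((fun k => ⟪k, d⟫_ℝ) '' K) (s + T) := by
    constructor
    · rintro x ⟨k, hk, rfl⟩
      rw [hself] at hk
      obtain ⟨_, ⟨i, rfl⟩, k', hk', rfl⟩ := hk
      have h1 : ⟪(A : EuclideanSpace ℝ (Fin m) →L[ℝ] EuclideanSpace ℝ (Fin m)) k' + t i, d⟫_ℝ
          = ⟪k', v⟫_ℝ + ⟪t i, d⟫_ℝ := by rw [inner_add_left, hadj]
      have h2 : ⟪k', v⟫_ℝ ≤ s := le_csSup (himg v).1 ⟨k', hk', rfl⟩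
      have h3 : ⟪t i, d⟫_ℝ ≤ T :=
        le_ciSup (f := fun i => ⟪t i, d⟫_ℝ) (Set.Finite.bddAbove (Set.finite_range _)) i
      show ⟪(A : EuclideanSpace ℝ (Fin m) →L[ℝ] EuclideanSpace ℝ (Fin m)) k' + t i, d⟫_ℝ ≤ s + T
      rw [h1]
      exact add_le_add h2 h3
    · intro b hb
      have hsb : s ≤ b - T := by
        apply csSup_le (himg v).2
        rintro x ⟨k, hk, rfl⟩
        have hmem : (A : EuclideanSpace ℝ (Fin m) →L[ℝ] EuclideanSpace ℝ (Fin m)) k + t i₀ ∈ K := by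
          rw [hself]
          exact Set.mem_iUnion.mpr ⟨i₀, ⟨k, hk, rfl⟩⟩
        have := hb ⟨_, hmem, rfl⟩
        simp only [inner_add_left, hadj] at this
        rw [hT]
        show ⟪k, v⟫_ℝ ≤ b - ⟪t i₀, d⟫_ℝ
        linarith
      linarith
  rw [step1, hs, main.csSup_eq (hK.image _)]
end

section
/- Let z ∈ ℂ with |z| > 1 and n ≥ 2, and let K ⊆ ℂ be the unique nonempty compact set with z·K = ⋃_{i=0}^{n-1} (K + i). Then x₀ = (n−1)/(2(z−1)) is a center of symmetry of K: 2x₀ − K = K. -/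
/-!
The reflection `σ k = c - k` about `c = (n - 1) / (z - 1)` (this is `2 x₀`) conjugates the
contraction `w ↦ (w + i) / z` to `w ↦ (w + (n - 1 - i)) / z`, because `z c = c + (n - 1)`.
Hence `σ '' K` is again a nonempty compact fixed set of the same iterated function system, and
such a set is unique: the Hutchinson operator contracts the Hausdorff distance by `‖z‖⁻¹ < 1`.
-/

open Metric Set
open scoped ENNReal NNReal

section Hausdorff

variable {α : Type*}

theorem LipschitzWith.infEDist_image_le [PseudoEMetricSpace α] {f : α → α} {r : ℝ≥0}
    (hf : LipschitzWith r f) {t : Set α} (ht : t.Nonempty) (x : α) :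
    infEDist (f x) (f '' t) ≤ r * infEDist x t := by
  have : Nonempty t := ht.to_subtype
  calc infEDist (f x) (f '' t) ≤ ⨅ y : t, r * edist x y :=
        le_iInf fun y => (infEDist_le_edist_of_mem (mem_image_of_mem f y.2)).trans (hf x y)
    _ = r * infEDist x t := by
        rw [infEDist, iInf_subtype', ENNReal.mul_iInf fun h => absurd h ENNReal.coe_ne_top]

theorem LipschitzWith.hausdorffEDist_image_le [PseudoEMetricSpace α] {f : α → α} {r : ℝ≥0}
    (hf : LipschitzWith r f) {s t : Set α} (hs : s.Nonempty) (ht : t.Nonempty) :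
    hausdorffEDist (f '' s) (f '' t) ≤ r * hausdorffEDist s t := by
  refine hausdorffEDist_le_of_infEDist (forall_mem_image.2 fun x hx => ?_)
    (forall_mem_image.2 fun x hx => ?_)
  · exact (hf.infEDist_image_le ht x).trans
      (mul_le_mul_right (infEDist_le_hausdorffEDist_of_mem hx) _)
  · rw [hausdorffEDist_comm]
    exact (hf.infEDist_image_le hs x).trans
      (mul_le_mul_right (infEDist_le_hausdorffEDist_of_mem hx) _)

theorem hausdorffEDist_iUnion_image_le [PseudoEMetricSpace α] {ι : Type*} {g : ι → α → α}
    {r : ℝ≥0} (hg : ∀ i, LipschitzWith r (g i)) {s t : Set α} (hs : s.Nonempty)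
    (ht : t.Nonempty) :
    hausdorffEDist (⋃ i, g i '' s) (⋃ i, g i '' t) ≤ r * hausdorffEDist s t :=
  hausdorffEDist_iUnion_le.trans (iSup_le fun i => (hg i).hausdorffEDist_image_le hs ht)

theorem eq_of_eq_iUnion_image_of_lipschitzWith [MetricSpace α] {ι : Type*} {g : ι → α → α}
    {r : ℝ≥0} (hg : ∀ i, LipschitzWith r (g i)) (hr : r < 1) {A B : Set α}
    (hA : A.Nonempty) (hB : B.Nonempty) (hAb : Bornology.IsBounded A)
    (hBb : Bornology.IsBounded B) (hAc : IsClosed A) (hBc : IsClosed B)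
    (hAfix : A = ⋃ i, g i '' A) (hBfix : B = ⋃ i, g i '' B) : A = B := by
  set d := hausdorffEDist A B
  have hd_ne_top : d ≠ ⊤ := hausdorffEDist_ne_top_of_nonempty_of_bounded hA hB hAb hBb
  have hd_le : d ≤ r * d := by
    calc d = hausdorffEDist (⋃ i, g i '' A) (⋃ i, g i '' B) := by rw [← hAfix, ← hBfix]
      _ ≤ r * d := hausdorffEDist_iUnion_image_le hg hA hB
  have hd_zero : d = 0 := by
    by_contra hd
    have : d * r < d * 1 := ENNReal.mul_lt_mul_right hd hd_ne_top (ENNReal.coe_lt_one_iff.2 hr)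
    rw [mul_one, mul_comm] at this
    exact this.not_ge hd_le
  exact (hAc.hausdorffEDist_zero_iff hBc).mp hd_zero

end Hausdorff

theorem image_iUnion_image_of_semiconj {α ι : Type*} {σ : α → α} {g : ι → α → α} (e : ι ≃ ι)
    (h : ∀ i x, σ (g i x) = g (e i) (σ x)) (s : Set α) :
    σ '' ⋃ i, g i '' s = ⋃ i, g i '' (σ '' s) := by
  simp only [image_iUnion, image_image, h]
  exact e.surjective.iUnion_comp fun j => (fun x => g j (σ x)) '' s

theorem Fin.cast_val_rev {R : Type*} [Ring R] {n : ℕ} (i : Fin n) :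
    ((i.rev : ℕ) : R) = n - 1 - i := by
  rw [Fin.val_rev, Nat.cast_sub i.isLt]
  push_cast
  abel

theorem lipschitzWith_add_div {z : ℂ} (i : ℂ) :
    LipschitzWith ‖z⁻¹‖₊ fun w => (w + i) / z := by
  refine LipschitzWith.of_dist_le_mul fun x y => ?_
  rw [Complex.dist_eq, Complex.dist_eq, ← sub_div, add_sub_add_right_eq_sub, div_eq_mul_inv,
    norm_mul, mul_comm, coe_nnnorm]

theorem eq_iUnion_image_add_div_of_mul_image_eq {ι : Type*} {z : ℂ} (hz : z ≠ 0) (a : ι → ℂ)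
    {K : Set ℂ} (hself : (fun w => z * w) '' K = ⋃ i, (fun k => k + a i) '' K) :
    K = ⋃ i, (fun w => (w + a i) / z) '' K := by
  have h := congrArg (image (· / z)) hself
  simpa only [image_image, image_iUnion, mul_div_cancel_left₀ _ hz, image_id'] using h

theorem attractor_symmetry_center_general {n : ℕ}
    (z : ℂ) (hz : 1 < ‖z‖)
    (K : Set ℂ) (hK : K.Nonempty) (hKc : IsCompact K)
    (hself : (fun w => z * w) '' K = ⋃ i : Fin n, (fun k => k + (i : ℂ)) '' K) :
    (fun k => 2 * ((n - 1 : ℂ) / (2 * (z - 1))) - k) '' K = K := by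
  have hz0 : z ≠ 0 := norm_pos_iff.1 (one_pos.trans hz)
  have hz1 : z - 1 ≠ 0 := sub_ne_zero.2 (by rintro rfl; simp at hz)
  set c := 2 * ((n - 1 : ℂ) / (2 * (z - 1)))
  have hc : z * c = c + (n - 1) := by simp only [c]; field_simp; ring
  set g : Fin n → ℂ → ℂ := fun i w => (w + i) / z
  have hKfix : K = ⋃ i, g i '' K := eq_iUnion_image_add_div_of_mul_image_eq hz0 _ hself
  have hreflect : ∀ i w, c - g i w = g (Fin.revPerm i) (c - w) := fun i w => by
    simp only [g, Fin.revPerm_apply, Fin.cast_val_rev]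
    field_simp
    linear_combination hc
  have hratio : ‖z⁻¹‖₊ < 1 := by
    rw [← NNReal.coe_lt_one, coe_nnnorm, norm_inv]
    exact inv_lt_one_of_one_lt₀ hz
  have hcont : Continuous (c - ·) := continuous_const.sub continuous_id
  refine eq_of_eq_iUnion_image_of_lipschitzWith (fun i => lipschitzWith_add_div _) hratio
    (hK.image _) hK (hKc.image hcont).isBounded hKc.isBounded (hKc.image hcont).isClosed
    hKc.isClosed ?_ hKfix
  rw [← image_iUnion_image_of_semiconj Fin.revPerm hreflect, ← hKfix]

theorem attractor_symmetry_center {n : ℕ} (hn : 2 ≤ n)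
    (z : ℂ) (hz : 1 < ‖z‖)
    (K : Set ℂ) (hK : K.Nonempty) (hKc : IsCompact K)
    (hself : (fun w => z * w) '' K = ⋃ i : Fin n, (fun k => k + (i : ℂ)) '' K) :
    (fun k => 2 * ((n - 1 : ℂ) / (2 * (z - 1))) - k) '' K = K :=
  attractor_symmetry_center_general z hz K hK hKc hself
end

section
/- Let z = r e^{iφ} with r > 1, n ≥ 2, and K the attractor with zK = ⋃_{i=0}^{n−1}(K+i), with symmetry center x₀ = (n−1)/(2(z−1)). Then the width function of K around x₀ satisfies 2h(α) = (n−1) Σ_{j=1}^∞ r^{−j} |cos(α + jφ)| for every angle α, where h(α) = sup_{k∈K} Re((k − x₀) e^{−iα}). -/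
/-!
Scaling by `z = r e^{iφ}` stretches by `r` and turns directions by `φ`, and moves the centre
`x₀` to `x₀ + (n - 1)/2`; the translate `K + i` adds `i cos θ` to the support function in
direction `θ`. Since `max_{0 ≤ i ≤ n-1} (i - (n - 1)/2) t = (n - 1)/2 · |t|`, the self-similarity
`zK = ⋃ (K + i)` becomes the functional equation `r h(β) = h(β + φ) + (n - 1)/2 · |cos (β + φ)|`.
Iterating it along `α, α + φ, α + 2φ, …` telescopes, and the remainder `r^{-M} h(α + Mφ)` tends to
`0` because `h` is bounded.
-/

open Complex Filter Finset Topology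

theorem hasSum_inv_pow_mul_of_mul_eq_add {r : ℝ} {s t : ℕ → ℝ} (hr : 1 < r)
    (hs : ∃ C, ∀ j, |s j| ≤ C) (ht : ∀ j, 0 ≤ t j) (hst : ∀ j, r * s j = s (j + 1) + t j) :
    HasSum (fun j => r⁻¹ ^ (j + 1) * t j) (s 0) := by
  have hr0 : 0 < r := by linarith
  have hinv : r⁻¹ * r = 1 := inv_mul_cancel₀ hr0.ne'
  have hpartial : ∀ M, ∑ j ∈ range M, r⁻¹ ^ (j + 1) * t j = s 0 - r⁻¹ ^ M * s M := by
    intro M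
    induction M with
    | zero => simp
    | succ M ih =>
      rw [sum_range_succ, ih, pow_succ]
      linear_combination (-(r⁻¹ ^ M * r⁻¹)) * hst M + (r⁻¹ ^ M * s M) * hinv
  have hrem : Tendsto (fun M => r⁻¹ ^ M * s M) atTop (𝓝 0) := by
    obtain ⟨C, hC⟩ := hs
    exact (tendsto_pow_atTop_nhds_zero_of_lt_one (by positivity) (inv_lt_one_of_one_lt₀ hr)
      ).zero_mul_isBoundedUnder_le (isBoundedUnder_of ⟨C, hC⟩)
  rw [hasSum_iff_tendsto_nat_of_nonneg (fun j => by have := ht j; positivity)]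
  refine (tendsto_congr hpartial).2 ?_
  simpa using tendsto_const_nhds.sub hrem

noncomputable def projDir (β : ℝ) (w : ℂ) : ℝ := (w * exp (-(β : ℂ) * I)).re

theorem continuous_projDir (β : ℝ) : Continuous (projDir β) :=
  continuous_re.comp (continuous_id.mul continuous_const)

theorem projDir_add (β : ℝ) (v w : ℂ) : projDir β (v + w) = projDir β v + projDir β w := by
  simp only [projDir, add_mul, add_re]

theorem projDir_ofReal (β t : ℝ) : projDir β t = t * Real.cos β := by
  rw [projDir, re_ofReal_mul, ← ofReal_neg, exp_ofReal_mul_I_re, Real.cos_neg]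

theorem abs_projDir_le (β : ℝ) (w : ℂ) : |projDir β w| ≤ ‖w‖ := by
  have hexp : ‖exp (-(β : ℂ) * I)‖ = 1 := by rw [← ofReal_neg, norm_exp_ofReal_mul_I]
  calc |projDir β w| ≤ ‖w * exp (-(β : ℂ) * I)‖ := abs_re_le_norm _
    _ = ‖w‖ := by rw [norm_mul, hexp, mul_one]

theorem projDir_ofReal_mul_exp_mul (r φ β : ℝ) (w : ℂ) :
    projDir (β + φ) (r * exp (φ * I) * w) = r * projDir β w := by
  have hexp : exp (φ * I) * exp (-((β + φ : ℝ) : ℂ) * I) = exp (-(β : ℂ) * I) := by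
    rw [← exp_add]; push_cast; ring_nf
  rw [projDir, projDir, ← re_ofReal_mul, ← hexp]
  ring_nf

/-- The paper's width function `h_{K,x₀}`. -/
noncomputable def supportFun (K : Set ℂ) (x₀ : ℂ) (β : ℝ) : ℝ :=
  sSup ((fun k => projDir β (k - x₀)) '' K)

section SupportFun

variable {K : Set ℂ} {x₀ : ℂ} {β : ℝ}

theorem projDir_sub_le_supportFun (hKc : IsCompact K) {k : ℂ} (hk : k ∈ K) :
    projDir β (k - x₀) ≤ supportFun K x₀ β :=
  le_csSup (hKc.image ((continuous_projDir β).comp (continuous_sub_right x₀))).bddAbove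
    (Set.mem_image_of_mem _ hk)

theorem supportFun_le (hK : K.Nonempty) {a : ℝ} (h : ∀ k ∈ K, projDir β (k - x₀) ≤ a) :
    supportFun K x₀ β ≤ a :=
  csSup_le (hK.image _) (Set.forall_mem_image.2 h)

theorem exists_abs_supportFun_le (hKc : IsCompact K) (hK : K.Nonempty) :
    ∃ C, ∀ β, |supportFun K x₀ β| ≤ C := by
  obtain ⟨C, hC⟩ := hKc.exists_bound_of_continuousOn (continuous_sub_right x₀).continuousOn
  refine ⟨C, fun β => abs_le.2 ⟨?_, supportFun_le hK fun k hk => ?_⟩⟩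
  · obtain ⟨k, hk⟩ := hK
    linarith [abs_le.1 ((abs_projDir_le β (k - x₀)).trans (hC k hk)),
      projDir_sub_le_supportFun (β := β) (x₀ := x₀) hKc hk]
  · exact (le_abs_self _).trans ((abs_projDir_le β _).trans (hC k hk))

end SupportFun

section SelfSimilar

variable {n : ℕ}

theorem digit_sub_half_mul_le (i : Fin n) (t : ℝ) :
    (((i : ℕ) : ℝ) - (n - 1) / 2) * t ≤ (n - 1) / 2 * |t| := by
  have hi : ((i : ℕ) : ℝ) + 1 ≤ n := by exact_mod_cast i.isLt
  rcases le_total 0 t with ht | ht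
  · rw [abs_of_nonneg ht]; nlinarith
  · rw [abs_of_nonpos ht]; nlinarith [(Nat.cast_nonneg (i : ℕ) : (0 : ℝ) ≤ (i : ℕ))]

theorem exists_digit_sub_half_mul_eq (hn : 0 < n) (t : ℝ) :
    ∃ i : Fin n, (((i : ℕ) : ℝ) - (n - 1) / 2) * t = (n - 1) / 2 * |t| := by
  rcases le_total 0 t with ht | ht
  · refine ⟨⟨n - 1, by omega⟩, ?_⟩
    rw [abs_of_nonneg ht, Nat.cast_sub (by omega)]; push_cast; ring
  · refine ⟨⟨0, hn⟩, ?_⟩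
    rw [abs_of_nonpos ht]; push_cast; ring

theorem supportFun_functional_eq {r φ : ℝ} {z x₀ : ℂ} {K : Set ℂ} (hn : 0 < n) (hr : 0 < r)
    (hz : z = r * exp (φ * I)) (hKc : IsCompact K) (hK : K.Nonempty)
    (hself : (fun w => z * w) '' K = ⋃ i : Fin n, (fun k => k + (i : ℂ)) '' K)
    (hx₀ : z * x₀ = x₀ + (((n - 1) / 2 : ℝ) : ℂ)) (β : ℝ) :
    r * supportFun K x₀ β = supportFun K x₀ (β + φ) + (n - 1) / 2 * |Real.cos (β + φ)| := by
  have hdigit : ∀ k k' (i : Fin n), z * k = k' + (i : ℂ) → r * projDir β (k - x₀) =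
      projDir (β + φ) (k' - x₀) + (((i : ℕ) : ℝ) - (n - 1) / 2) * Real.cos (β + φ) := by
    intro k k' i h
    have hzk : z * k - x₀ = z * (k - x₀) + (((n - 1) / 2 : ℝ) : ℂ) := by
      rw [mul_sub, hx₀]; ring
    have hk' : k' - x₀ + (((i : ℕ) : ℝ) : ℂ) = z * k - x₀ := by rw [h]; push_cast; ring
    have := congrArg (projDir (β + φ)) hk'
    rw [hzk, projDir_add, projDir_add, hz, projDir_ofReal_mul_exp_mul, projDir_ofReal,
      projDir_ofReal] at this
    linarith
  apply le_antisymm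
  · rw [mul_comm, ← le_div_iff₀ hr]
    refine supportFun_le hK fun k hk => ?_
    obtain ⟨_, ⟨i, rfl⟩, k', hk', hzk⟩ : z * k ∈ ⋃ i : Fin n, (fun k => k + (i : ℂ)) '' K :=
      hself ▸ Set.mem_image_of_mem _ hk
    rw [le_div_iff₀ hr, mul_comm, hdigit k k' i hzk.symm]
    linarith [projDir_sub_le_supportFun (β := β + φ) (x₀ := x₀) hKc hk',
      digit_sub_half_mul_le i (Real.cos (β + φ))]
  · rw [← le_sub_iff_add_le]
    refine supportFun_le hK fun k' hk' => ?_
    obtain ⟨i, hi⟩ := exists_digit_sub_half_mul_eq hn (Real.cos (β + φ))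
    obtain ⟨k, hk, hzk⟩ : k' + (i : ℂ) ∈ (fun w => z * w) '' K :=
      hself ▸ Set.mem_iUnion.2 ⟨i, Set.mem_image_of_mem _ hk'⟩
    have := mul_le_mul_of_nonneg_left (projDir_sub_le_supportFun (β := β) (x₀ := x₀) hKc hk) hr.le
    linarith [hdigit k k' i hzk]

end SelfSimilar

theorem width_series_complex_base {n : ℕ} (hn : 2 ≤ n)
    (r φ : ℝ) (hr : 1 < r) (z : ℂ) (hz : z = r * Complex.exp (φ * Complex.I))
    (K : Set ℂ) (hK : K.Nonempty) (hKc : IsCompact K)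
    (hself : (fun w => z * w) '' K = ⋃ i : Fin n, (fun k => k + (i : ℂ)) '' K)
    (x₀ : ℂ) (hx₀ : x₀ = (n - 1 : ℂ) / (2 * (z - 1)))
    (α : ℝ) :
    HasSum
      (fun j : ℕ => (n - 1 : ℝ) * r⁻¹ ^ (j + 1) * |Real.cos (α + (j + 1) * φ)|)
      (2 * sSup ((fun k => ((k - x₀) * Complex.exp (-(α : ℂ) * Complex.I)).re) '' K)) := by
  have hz1 : z - 1 ≠ 0 := by
    intro h
    have : ‖z‖ = r := by rw [hz, norm_mul, norm_exp_ofReal_mul_I, norm_real, Real.norm_eq_abs,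
      abs_of_pos (by linarith), mul_one]
    rw [sub_eq_zero.1 h, norm_one] at this
    linarith
  have hcentre : z * x₀ = x₀ + (((n - 1) / 2 : ℝ) : ℂ) := by
    rw [hx₀]; field_simp; push_cast; ring
  have hc : (0 : ℝ) ≤ (n - 1) / 2 := by
    have : (2 : ℝ) ≤ n := by exact_mod_cast hn
    linarith
  obtain ⟨C, hC⟩ := exists_abs_supportFun_le (x₀ := x₀) hKc hK
  have hseries := hasSum_inv_pow_mul_of_mul_eq_add hr (s := fun j => supportFun K x₀ (α + j * φ))
    (t := fun j => (n - 1) / 2 * |Real.cos (α + (j + 1) * φ)|) ⟨C, fun j => hC _⟩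
    (fun j => mul_nonneg hc (abs_nonneg _))
    (fun j => by simpa [add_mul, add_assoc] using
      supportFun_functional_eq (by omega) (by linarith) hz hKc hK hself hcentre (α + j * φ))
  rw [Nat.cast_zero, zero_mul, add_zero] at hseries
  have hterm : ∀ j : ℕ, (n - 1 : ℝ) * r⁻¹ ^ (j + 1) * |Real.cos (α + (j + 1) * φ)| =
      2 * (r⁻¹ ^ (j + 1) * ((n - 1) / 2 * |Real.cos (α + (j + 1) * φ)|)) := fun j => by ring
  simp only [hterm]
  exact hseries.mul_left 2
end
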